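/- arXiv:1507.00770 — 5 statements merged into one kernel-verified Lean document; each statement's English description precedes it below -/
import Mathlib

section
/- The function α is additive along geodesic paths: if (x_1, ..., x_n) is a geodesic path in Z^2 and 1 ≤ i ≤ n, then α(x_1, x_i) + α(x_i, x_n) = α(x_1, x_n). -/
/-- The sup-norm distance between two lattice points. -/
def dinf (x y : ℤ × ℤ) : ℤ := max |y.1 - x.1| |y.2 - x.2|

/-- δ(i,j) = (i - j) mod 2, taken in {0,1}. -/
def del (i j : ℤ) : ℤ := (i - j) % 2

/-- The maximum height function α(x,·) vanishing at x. -/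
def alpha (x y : ℤ × ℤ) : ℤ :=
  if (x.1 - x.2) % 2 = 0 then
    if y.1 - x.1 ≥ y.2 - x.2 then 2 * dinf x y + del (y.1 - x.1) (y.2 - x.2)
    else 2 * dinf x y - del (y.1 - x.1) (y.2 - x.2)
  else
    if y.1 - x.1 ≥ y.2 - x.2 then 2 * dinf x y - del (y.1 - x.1) (y.2 - x.2)
    else 2 * dinf x y + del (y.1 - x.1) (y.2 - x.2)

/-- `(x 0, x 1, …, x (n-1))` is a geodesic path: consecutive points are distinct
corners of a common unit square, and the sup-distance to the first point grows by 1
at every step. -/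
def IsGeodesic (x : ℕ → ℤ × ℤ) (n : ℕ) : Prop :=
  ∀ i, i + 1 < n →
    x (i + 1) ≠ x i ∧
    |(x (i + 1)).1 - (x i).1| ≤ 1 ∧ |(x (i + 1)).2 - (x i).2| ≤ 1 ∧
    dinf (x 0) (x (i + 1)) = dinf (x 0) (x i) + 1

lemma alpha_self (x : ℤ × ℤ) : alpha x x = 0 := by
  simp [alpha, del, dinf]

lemma dinf_triangle (x y z : ℤ × ℤ) : dinf x z ≤ dinf x y + dinf y z := by
  simp only [dinf, Int.abs_eq_natAbs]
  omega

set_option maxHeartbeats 2000000 in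
lemma alpha_step (x y z : ℤ × ℤ) (h1 : |z.1 - y.1| ≤ 1) (h2 : |z.2 - y.2| ≤ 1)
    (hd : dinf x z = dinf x y + 1) :
    alpha x z = alpha x y + alpha y z := by
  obtain ⟨x1, x2⟩ := x; obtain ⟨y1, y2⟩ := y; obtain ⟨z1, z2⟩ := z
  simp only [alpha, del, dinf] at *
  have hm1 : (y1 - x1 : ℤ) ≤ max |y1 - x1| |y2 - x2| :=
    le_trans (le_abs_self _) (le_max_left _ _)
  have hm2 : (-(y1 - x1) : ℤ) ≤ max |y1 - x1| |y2 - x2| :=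
    le_trans (neg_le_abs _) (le_max_left _ _)
  have hm3 : (y2 - x2 : ℤ) ≤ max |y1 - x1| |y2 - x2| :=
    le_trans (le_abs_self _) (le_max_right _ _)
  have hm4 : (-(y2 - x2) : ℤ) ≤ max |y1 - x1| |y2 - x2| :=
    le_trans (neg_le_abs _) (le_max_right _ _)
  have hm5 : max |y1 - x1| |y2 - x2| = y1 - x1 ∨ max |y1 - x1| |y2 - x2| = -(y1 - x1)
      ∨ max |y1 - x1| |y2 - x2| = y2 - x2 ∨ max |y1 - x1| |y2 - x2| = -(y2 - x2) := by
    rcases max_choice |y1 - x1| |y2 - x2| with h | h <;> rw [h] <;>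
      [rcases abs_choice (y1 - x1) with h' | h'; rcases abs_choice (y2 - x2) with h' | h'] <;>
      simp [h']
  have hM1 : (z1 - x1 : ℤ) ≤ max |z1 - x1| |z2 - x2| :=
    le_trans (le_abs_self _) (le_max_left _ _)
  have hM2 : (-(z1 - x1) : ℤ) ≤ max |z1 - x1| |z2 - x2| :=
    le_trans (neg_le_abs _) (le_max_left _ _)
  have hM3 : (z2 - x2 : ℤ) ≤ max |z1 - x1| |z2 - x2| :=
    le_trans (le_abs_self _) (le_max_right _ _)
  have hM4 : (-(z2 - x2) : ℤ) ≤ max |z1 - x1| |z2 - x2| :=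
    le_trans (neg_le_abs _) (le_max_right _ _)
  have hM5 : max |z1 - x1| |z2 - x2| = z1 - x1 ∨ max |z1 - x1| |z2 - x2| = -(z1 - x1)
      ∨ max |z1 - x1| |z2 - x2| = z2 - x2 ∨ max |z1 - x1| |z2 - x2| = -(z2 - x2) := by
    rcases max_choice |z1 - x1| |z2 - x2| with h | h <;> rw [h] <;>
      [rcases abs_choice (z1 - x1) with h' | h'; rcases abs_choice (z2 - x2) with h' | h'] <;>
      simp [h']
  generalize hg1 : (max |y1 - x1| |y2 - x2| : ℤ) = m at *
  generalize hg2 : (max |z1 - x1| |z2 - x2| : ℤ) = M at *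
  simp only [Int.abs_eq_natAbs] at h1 h2 ⊢
  split_ifs <;> omega

/-- α is additive along geodesic paths: if `(x 0, …, x (n-1))` is a geodesic path
and `i < n`, then `α(x 0, x i) + α(x i, x (n-1)) = α(x 0, x (n-1))`. -/
theorem alpha_additive (x : ℕ → ℤ × ℤ) (n i : ℕ)
    (h : IsGeodesic x n) (hn : 0 < n) (hi : i < n) :
    alpha (x 0) (x i) + alpha (x i) (x (n - 1)) = alpha (x 0) (x (n - 1)) := by
  -- dinf from x 0
  have hd0 : ∀ k, k < n → dinf (x 0) (x k) = k := by
    intro k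
    induction k with
    | zero => intro _; simp [dinf]
    | succ k ih =>
      intro hk
      have := (h k hk).2.2.2
      rw [this, ih (by omega)]; push_cast; ring
  have hstep1 : ∀ k, k + 1 < n → dinf (x k) (x (k + 1)) ≤ 1 := by
    intro k hk
    obtain ⟨-, h1, h2, -⟩ := h k hk
    simp only [dinf]; omega
  -- dinf from x i
  have hdi : ∀ k, i ≤ k → k < n → dinf (x i) (x k) = (k : ℤ) - i := by
    intro k
    induction k with
    | zero =>
      intro hik _
      interval_cases i
      simp [dinf]
    | succ k ih =>
      intro hik hk
      rcases Nat.eq_or_lt_of_le hik with hik' | hik'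
      · rw [← hik']; simp [dinf]
      · have hle : dinf (x i) (x (k + 1)) ≤ (k : ℤ) + 1 - i := by
          calc dinf (x i) (x (k + 1)) ≤ dinf (x i) (x k) + dinf (x k) (x (k + 1)) :=
                dinf_triangle _ _ _
            _ ≤ (k : ℤ) - i + 1 := by
                have := hstep1 k hk
                have := ih (by omega) (by omega)
                omega
            _ = (k : ℤ) + 1 - i := by ring
        have hge : ((k : ℤ) + 1) - i ≤ dinf (x i) (x (k + 1)) := by
          have ht := dinf_triangle (x 0) (x i) (x (k + 1))
          have h1 := hd0 i (by omega)
          have h2 := hd0 (k + 1) hk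
          push_cast at h2 ⊢
          omega
        omega
  -- main additivity by induction
  have main : ∀ k, i ≤ k → k < n → alpha (x 0) (x i) + alpha (x i) (x k) = alpha (x 0) (x k) := by
    intro k
    induction k with
    | zero =>
      intro hik _
      interval_cases i
      simp [alpha_self]
    | succ k ih =>
      intro hik hk
      rcases Nat.eq_or_lt_of_le hik with hik' | hik'
      · rw [← hik', alpha_self]; ring
      · obtain ⟨-, h1, h2, hd⟩ := h k hk
        have s0 : alpha (x 0) (x (k + 1)) = alpha (x 0) (x k) + alpha (x k) (x (k + 1)) :=
          alpha_step _ _ _ h1 h2 hd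
        have si : alpha (x i) (x (k + 1)) = alpha (x i) (x k) + alpha (x k) (x (k + 1)) := by
          apply alpha_step _ _ _ h1 h2
          rw [hdi k (by omega) (by omega), hdi (k + 1) (by omega) hk]
          push_cast; ring
        have := ih (by omega) (by omega)
        omega
  have := main (n - 1) (by omega) (by omega)
  exact this
end

section
/- The function α(x, ·) is strictly increasing along geodesic paths starting at x: if (x_1, ..., x_n) is a geodesic path in Z^2 with x = x_1, then for every i < n we have α(x, x_{i+1}) > α(x, x_i). -/
/-- α(x,·) is strictly increasing along geodesic paths starting at `x`. -/
theorem alpha_strict_mono (x : ℕ → ℤ × ℤ) (n i : ℕ)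
    (h : IsGeodesic x n) (hi : i + 1 < n) :
    alpha (x 0) (x i) < alpha (x 0) (x (i + 1)) := by
  obtain ⟨hne, h1, h2, hd⟩ := h i hi
  simp only [alpha, dinf, del, Int.abs_eq_natAbs, Int.max_def] at *
  split_ifs at * <;> omega
end

section
/- Refined tileability criterion: let R be a finite simply connected region of Z^2, h : ∂R → Z a valid boundary height function, and S ⊆ R a set containing ∂R. Suppose g : S → Z satisfies g = h on ∂R and −α(y,x) ≤ g(y) − g(x) ≤ α(x,y) for every pair x, y ∈ S with x ≈_S y, meaning that x ∼_R y and G(x,y) \ {x,y} is disjoint from S, where G(x,y) is the union of all geodesic paths from x to y. Then for every pair x, y ∈ S with x ∼_R y, −α(y,x) ≤ g(y) − g(x) ≤ α(x,y). -/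
/-- `x ∼_A y` : there is a geodesic path from `a` to `b` all of whose points lie in `A`. -/
def GeodesicIn (A : Set (ℤ × ℤ)) (a b : ℤ × ℤ) : Prop :=
  ∃ (n : ℕ) (x : ℕ → ℤ × ℤ), 0 < n ∧ IsGeodesic x n ∧ x 0 = a ∧ x (n - 1) = b ∧
    ∀ i < n, x i ∈ A

/-- `G(a,b)` : the set of points lying on at least one geodesic path from `a` to `b`. -/
def Gset (a b : ℤ × ℤ) : Set (ℤ × ℤ) :=
  {z | ∃ (n : ℕ) (x : ℕ → ℤ × ℤ), 0 < n ∧ IsGeodesic x n ∧ x 0 = a ∧ x (n - 1) = b ∧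
    ∃ i < n, x i = z}

/-- Crossing the lattice edge from `x` to adjacent `y` has a white square on the left,
for the chessboard coloring in which the unit square with corners (0,0),(1,1) is white. -/
def WhiteLeft (x y : ℤ × ℤ) : Prop :=
  (((y.1 = x.1 + 1 ∧ y.2 = x.2) ∨ (y.1 = x.1 - 1 ∧ y.2 = x.2)) ∧ (x.1 + x.2) % 2 = 0) ∨
  (((y.2 = x.2 + 1 ∧ y.1 = x.1) ∨ (y.2 = x.2 - 1 ∧ y.1 = x.1)) ∧ (x.1 + x.2) % 2 = 1)

/-- A height function on the whole plane `ℤ²` (corresponding to a domino tiling of the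
plane): the mod-4 condition on points whose difference has both coordinates even, and
the difference across each lattice edge with a white square on the left is 1 or -3. -/
def IsHeight (h : ℤ × ℤ → ℤ) : Prop :=
  (∀ x y : ℤ × ℤ, (x.1 - y.1) % 2 = 0 → (x.2 - y.2) % 2 = 0 → (h x - h y) % 4 = 0) ∧
  (∀ x y : ℤ × ℤ, WhiteLeft x y → h x - h y = 1 ∨ h x - h y = -3)

/-- A region is a set of unit squares, a square being recorded by its lower-left corner.
`pts R` is the set of lattice points of the region: all corners of its squares. -/
def pts (R : Set (ℤ × ℤ)) : Set (ℤ × ℤ) :=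
  {v | ∃ s ∈ R, (v.1 = s.1 ∨ v.1 = s.1 + 1) ∧ (v.2 = s.2 ∨ v.2 = s.2 + 1)}

/-- `bdry R` : the lattice points of `R` that are also corners of some square not in `R`. -/
def bdry (R : Set (ℤ × ℤ)) : Set (ℤ × ℤ) :=
  {v ∈ pts R | ∃ s ∉ R, (v.1 = s.1 ∨ v.1 = s.1 + 1) ∧ (v.2 = s.2 ∨ v.2 = s.2 + 1)}

/-- A set of squares is connected under edge-adjacency. -/
def ConnIn (A : Set (ℤ × ℤ)) : Prop :=
  ∀ a ∈ A, ∀ b ∈ A,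
    Relation.ReflTransGen (fun u v => (|u.1 - v.1| + |u.2 - v.2| = 1) ∧ u ∈ A ∧ v ∈ A) a b

/-- A region (set of squares) is simply connected: it is connected and its complement
is connected. -/
def SimplyConnected (R : Set (ℤ × ℤ)) : Prop := ConnIn R ∧ ConnIn Rᶜ

/-- The lattice edge from `x` to adjacent `y` belongs to the region `R`: at least one
of the two unit squares containing the edge is a square of `R`. -/
def EdgeInRegion (R : Set (ℤ × ℤ)) (x y : ℤ × ℤ) : Prop :=
  (y = (x.1 + 1, x.2) ∧ ((x.1, x.2) ∈ R ∨ (x.1, x.2 - 1) ∈ R)) ∨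
  (y = (x.1 - 1, x.2) ∧ ((x.1 - 1, x.2) ∈ R ∨ (x.1 - 1, x.2 - 1) ∈ R)) ∨
  (y = (x.1, x.2 + 1) ∧ ((x.1, x.2) ∈ R ∨ (x.1 - 1, x.2) ∈ R)) ∨
  (y = (x.1, x.2 - 1) ∧ ((x.1, x.2 - 1) ∈ R ∨ (x.1 - 1, x.2 - 1) ∈ R))

/-- The lattice edge from `x` to adjacent `y` lies on the boundary of the region `R`:
exactly one of the two unit squares containing the edge is a square of `R`. -/
def BoundaryEdge (R : Set (ℤ × ℤ)) (x y : ℤ × ℤ) : Prop :=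
  (y = (x.1 + 1, x.2) ∧ ¬(((x.1, x.2) ∈ R) ↔ ((x.1, x.2 - 1) ∈ R))) ∨
  (y = (x.1 - 1, x.2) ∧ ¬(((x.1 - 1, x.2) ∈ R) ↔ ((x.1 - 1, x.2 - 1) ∈ R))) ∨
  (y = (x.1, x.2 + 1) ∧ ¬(((x.1, x.2) ∈ R) ↔ ((x.1 - 1, x.2) ∈ R))) ∨
  (y = (x.1, x.2 - 1) ∧ ¬(((x.1, x.2 - 1) ∈ R) ↔ ((x.1 - 1, x.2 - 1) ∈ R)))

/-- A height function of (a domino tiling of) the region `R`: the mod-4 condition on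
lattice points of `R`, and across every edge of `R` traversed with a white square on
the left the height decreases by exactly 1 (a free edge) or increases by 3 (a domino
is crossed). -/
def IsHeightOn (R : Set (ℤ × ℤ)) (h : ℤ × ℤ → ℤ) : Prop :=
  (∀ x ∈ pts R, ∀ y ∈ pts R,
      (x.1 - y.1) % 2 = 0 → (x.2 - y.2) % 2 = 0 → (h x - h y) % 4 = 0) ∧
  (∀ x y : ℤ × ℤ, EdgeInRegion R x y → WhiteLeft x y → h x - h y = 1 ∨ h x - h y = -3)

/-- A valid height function of the boundary `∂R`: when traversing a boundary edge of
`R` from `x` to `y` with a white square on the left, the height drops by exactly 1. -/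
def ValidBoundaryHeight (R : Set (ℤ × ℤ)) (h : ℤ × ℤ → ℤ) : Prop :=
  ∀ x y : ℤ × ℤ, BoundaryEdge R x y → WhiteLeft x y → h x - h y = 1

/-- `x ≈_S y` : both points are in `S`, they are joined by a geodesic path inside the
ambient point set `A`, and no point of `G(x,y)` other than `x, y` belongs to `S`. -/
def ApproxRel (A S : Set (ℤ × ℤ)) (a b : ℤ × ℤ) : Prop :=
  a ∈ S ∧ b ∈ S ∧ GeodesicIn A a b ∧ ∀ z ∈ Gset a b, z ≠ a → z ≠ b → z ∉ S

lemma dinf_spec (x y : ℤ × ℤ) :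
    (y.1 - x.1 ≤ dinf x y) ∧ (x.1 - y.1 ≤ dinf x y) ∧
    (y.2 - x.2 ≤ dinf x y) ∧ (x.2 - y.2 ≤ dinf x y) ∧
    (dinf x y = y.1 - x.1 ∨ dinf x y = x.1 - y.1 ∨ dinf x y = y.2 - x.2 ∨ dinf x y = x.2 - y.2) := by
  unfold dinf
  rcases max_cases |y.1 - x.1| |y.2 - x.2| with ⟨h1, h2⟩ | ⟨h1, h2⟩ <;>
  rcases abs_cases (y.1 - x.1) with ⟨a1, a2⟩ | ⟨a1, a2⟩ <;>
  rcases abs_cases (y.2 - x.2) with ⟨b1, b2⟩ | ⟨b1, b2⟩ <;> omega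

lemma dinf_self (p : ℤ × ℤ) : dinf p p = 0 := by simp [dinf]

lemma dinf_nonneg' (p q : ℤ × ℤ) : 0 ≤ dinf p q := by
  have := dinf_spec p q; omega

lemma dinf_comm' (p q : ℤ × ℤ) : dinf p q = dinf q p := by
  unfold dinf; rw [abs_sub_comm q.1 p.1, abs_sub_comm q.2 p.2]

lemma dinf_eq_zero' {p q : ℤ × ℤ} (h : dinf p q = 0) : p = q := by
  have := dinf_spec p q
  exact Prod.ext_iff.mpr ⟨by omega, by omega⟩

lemma dinf_val (p q : ℤ × ℤ) (h1 : q.2 - p.2 ≤ q.1 - p.1) (h2 : p.2 - q.2 ≤ q.1 - p.1) :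
    dinf p q = q.1 - p.1 := by
  have s := dinf_spec p q
  rcases s.2.2.2.2 with e | e | e | e <;> omega

lemma dinf_succ_le (p q r : ℤ × ℤ) (h1 : |q.1 - r.1| ≤ 1) (h2 : |q.2 - r.2| ≤ 1) :
    dinf p q ≤ dinf p r + 1 := by
  have s1 := dinf_spec p q
  have s2 := dinf_spec p r
  rcases abs_cases (q.1 - r.1) with ⟨e1, _⟩ | ⟨e1, _⟩ <;>
  rcases abs_cases (q.2 - r.2) with ⟨e2, _⟩ | ⟨e2, _⟩ <;>
  rcases s1.2.2.2.2 with e | e | e | e <;> omega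

lemma dinf_triangle_s13 (p q r : ℤ × ℤ) : dinf p r ≤ dinf p q + dinf q r := by
  have s1 := dinf_spec p q
  have s2 := dinf_spec q r
  have s3 := dinf_spec p r
  rcases s3.2.2.2.2 with e | e | e | e <;> omega

lemma geo_dinf {x : ℕ → ℤ × ℤ} {n : ℕ} (h : IsGeodesic x n) :
    ∀ i, i < n → dinf (x 0) (x i) = i := by
  intro i
  induction i with
  | zero => intro _; simp [dinf_self]
  | succ i ih =>
    intro hi
    have hstep := (h i hi).2.2.2
    have := ih (by omega)
    omega

lemma geo_sep {x : ℕ → ℤ × ℤ} {n : ℕ} (h : IsGeodesic x n) :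
    ∀ j i, i ≤ j → j < n → dinf (x i) (x j) ≤ (j : ℤ) - (i : ℤ) := by
  intro j
  induction j with
  | zero =>
    intro i h1 _
    have : i = 0 := by omega
    subst this; simp [dinf_self]
  | succ j ih =>
    intro i h1 h2
    by_cases hij : i = j + 1
    · subst hij; simp [dinf_self]
    · have hstep := h j h2
      have h3 := dinf_succ_le (x i) (x (j+1)) (x j) hstep.2.1 hstep.2.2.1
      have h4 := ih i (by omega) (by omega)
      omega

lemma gset_sum {a b z : ℤ × ℤ} (hz : z ∈ Gset a b) : dinf a z + dinf z b = dinf a b := by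
  obtain ⟨n, x, hn, hgeo, hx0, hxl, i, hi, hxi⟩ := hz
  subst hx0; subst hxl; subst hxi
  have e1 := geo_dinf hgeo i hi
  have e2 := geo_dinf hgeo (n-1) (by omega)
  have e3 := geo_sep hgeo (n-1) i (by omega) (by omega)
  have e4 := dinf_triangle_s13 (x 0) (x i) (x (n-1))
  omega

lemma stair_bound (f : ℤ → ℤ) (ax bx : ℤ)
    (hL : ∀ u, ax ≤ u → u < bx → f (u+1) - f u ≤ 1 ∧ f u - f (u+1) ≤ 1) :
    ∀ x1 x2, ax ≤ x1 → x1 ≤ x2 → x2 ≤ bx → f x2 - f x1 ≤ x2 - x1 ∧ f x1 - f x2 ≤ x2 - x1 := by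
  have key : ∀ k : ℕ, ∀ x1, ax ≤ x1 → x1 + (k:ℤ) ≤ bx →
      f (x1 + (k:ℤ)) - f x1 ≤ (k:ℤ) ∧ f x1 - f (x1 + (k:ℤ)) ≤ (k:ℤ) := by
    intro k
    induction k with
    | zero => intro x1 _ _; norm_num
    | succ k ih =>
      intro x1 hx1 hx2
      have ec : x1 + ((k+1 : ℕ):ℤ) = (x1 + (k:ℤ)) + 1 := by push_cast; ring
      have h4 := hL (x1 + (k:ℤ)) (by omega) (by omega)
      have h5 := ih x1 hx1 (by omega)
      rw [ec]
      omega
  intro x1 x2 h1 h2 h3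
  have e : x2 = x1 + ((x2 - x1).toNat : ℤ) := by omega
  rw [e]
  have := key (x2 - x1).toNat x1 h1 (by omega)
  omega

/-- staircase gives a geodesic, with all its points recorded -/
lemma stair_geodesicIn (P : Set (ℤ × ℤ)) (f : ℤ → ℤ) (ax bx u1 u2 : ℤ)
    (h1 : ax ≤ u1) (h2 : u1 ≤ u2) (h3 : u2 ≤ bx)
    (hL : ∀ u, ax ≤ u → u < bx → f (u+1) - f u ≤ 1 ∧ f u - f (u+1) ≤ 1)
    (hm : ∀ u, ax ≤ u → u ≤ bx → (u, f u) ∈ P) :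
    GeodesicIn P (u1, f u1) (u2, f u2) ∧ ∀ u, u1 ≤ u → u ≤ u2 → (u, f u) ∈ Gset (u1, f u1) (u2, f u2) := by
  have hb := stair_bound f ax bx hL
  have dv : ∀ j : ℕ, (j : ℤ) ≤ u2 - u1 →
      dinf (u1 + ((0:ℕ):ℤ), f (u1 + ((0:ℕ):ℤ))) (u1 + (j:ℤ), f (u1 + (j:ℤ))) = (j:ℤ) := by
    intro j hj
    have hbj := hb (u1 + ((0:ℕ):ℤ)) (u1 + (j:ℤ)) (by omega) (by omega) (by omega)
    have hv := dinf_val (u1 + ((0:ℕ):ℤ), f (u1 + ((0:ℕ):ℤ))) (u1 + (j:ℤ), f (u1 + (j:ℤ)))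
      (by show f (u1 + (j:ℤ)) - f (u1 + ((0:ℕ):ℤ)) ≤ (u1 + (j:ℤ)) - (u1 + ((0:ℕ):ℤ)); omega)
      (by show f (u1 + ((0:ℕ):ℤ)) - f (u1 + (j:ℤ)) ≤ (u1 + (j:ℤ)) - (u1 + ((0:ℕ):ℤ)); omega)
    rw [hv]
    show (u1 + (j:ℤ)) - (u1 + ((0:ℕ):ℤ)) = (j:ℤ)
    omega
  have hgeo : IsGeodesic (fun i : ℕ => ((u1 + (i:ℤ), f (u1 + (i:ℤ))) : ℤ × ℤ)) ((u2 - u1).toNat + 1) := by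
    intro i hi
    dsimp only
    have ec : ((i+1 : ℕ) : ℤ) = (i:ℤ) + 1 := by push_cast; ring
    have ea : u1 + ((i:ℤ)+1) = (u1 + (i:ℤ)) + 1 := by ring
    have hstep := hL (u1 + (i:ℤ)) (by omega) (by omega)
    refine ⟨?_, ?_, ?_, ?_⟩
    · intro hcon; rw [Prod.mk.injEq] at hcon; omega
    · rw [abs_le]; constructor <;> omega
    · rw [ec, ea, abs_le]; constructor <;> omega
    · rw [dv (i+1) (by omega), dv i (by omega)]; omega
  constructor
  · refine ⟨(u2 - u1).toNat + 1, fun i : ℕ => (u1 + (i:ℤ), f (u1 + (i:ℤ))), Nat.succ_pos _, hgeo, ?_, ?_, ?_⟩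
    · show (u1 + ((0:ℕ):ℤ), f (u1 + ((0:ℕ):ℤ))) = (u1, f u1)
      norm_num
    · show (u1 + (((u2 - u1).toNat + 1 - 1 : ℕ):ℤ), f (u1 + (((u2 - u1).toNat + 1 - 1 : ℕ):ℤ))) = (u2, f u2)
      have e : u1 + (((u2 - u1).toNat + 1 - 1 : ℕ):ℤ) = u2 := by
        simp only [Nat.add_sub_cancel]; omega
      rw [e]
    · intro i hi; dsimp only; exact hm _ (by omega) (by omega)
  · intro u hu1 hu2
    refine ⟨(u2 - u1).toNat + 1, fun i : ℕ => (u1 + (i:ℤ), f (u1 + (i:ℤ))), Nat.succ_pos _, hgeo, ?_, ?_, (u - u1).toNat, by omega, ?_⟩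
    · show (u1 + ((0:ℕ):ℤ), f (u1 + ((0:ℕ):ℤ))) = (u1, f u1)
      norm_num
    · show (u1 + (((u2 - u1).toNat + 1 - 1 : ℕ):ℤ), f (u1 + (((u2 - u1).toNat + 1 - 1 : ℕ):ℤ))) = (u2, f u2)
      have e : u1 + (((u2 - u1).toNat + 1 - 1 : ℕ):ℤ) = u2 := by
        simp only [Nat.add_sub_cancel]; omega
      rw [e]
    · show (u1 + (((u - u1).toNat : ℕ):ℤ), f (u1 + (((u - u1).toNat : ℕ):ℤ))) = (u, f u)
      have e : u1 + (((u - u1).toNat : ℕ):ℤ) = u := by omega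
      rw [e]

lemma geo_east {P : Set (ℤ × ℤ)} {a b : ℤ × ℤ} (hg : GeodesicIn P a b)
    (he : a.2 - b.2 ≤ b.1 - a.1) (he' : b.2 - a.2 ≤ b.1 - a.1) :
    ∃ f : ℤ → ℤ, f a.1 = a.2 ∧ f b.1 = b.2 ∧
      (∀ u, a.1 ≤ u → u < b.1 → f (u+1) - f u ≤ 1 ∧ f u - f (u+1) ≤ 1) ∧
      (∀ u, a.1 ≤ u → u ≤ b.1 → (u, f u) ∈ P) := by
  obtain ⟨n, x, hn, hgeo, hx0, hxl, hmem⟩ := hg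
  have hd : dinf a b = b.1 - a.1 := dinf_val a b he' he
  have hnd : (n : ℤ) - 1 = b.1 - a.1 := by
    have h := geo_dinf hgeo (n-1) (by omega)
    rw [hx0, hxl] at h
    omega
  have hF : ∀ i, i < n → (x i).1 = a.1 + (i:ℤ) ∧ (x i).2 - a.2 ≤ (i:ℤ) ∧ a.2 - (x i).2 ≤ (i:ℤ) := by
    intro i hi
    have e1 := geo_dinf hgeo i hi
    rw [hx0] at e1
    have e3 := geo_sep hgeo (n-1) i (by omega) (by omega)
    rw [hxl] at e3
    have s1 := dinf_spec a (x i)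
    have s2 := dinf_spec (x i) b
    refine ⟨by omega, by omega, by omega⟩
  refine ⟨fun u => (x ((u - a.1).toNat)).2, ?_, ?_, ?_, ?_⟩
  · show (x ((a.1 - a.1).toNat)).2 = a.2
    have e : (a.1 - a.1).toNat = 0 := by omega
    rw [e, hx0]
  · show (x ((b.1 - a.1).toNat)).2 = b.2
    have e : (b.1 - a.1).toNat = n - 1 := by omega
    rw [e, hxl]
  · intro u h1 h2
    dsimp only
    have hi : (u - a.1).toNat + 1 < n := by omega
    have e : (u + 1 - a.1).toNat = (u - a.1).toNat + 1 := by omega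
    have hstep := (hgeo _ hi).2.2.1
    have l1 := le_abs_self ((x ((u - a.1).toNat + 1)).2 - (x ((u - a.1).toNat)).2)
    have l2 := neg_abs_le ((x ((u - a.1).toNat + 1)).2 - (x ((u - a.1).toNat)).2)
    rw [e]
    omega
  · intro u h1 h2
    dsimp only
    have hi : (u - a.1).toNat < n := by omega
    have hF' := hF _ hi
    have e : (u, (x ((u - a.1).toNat)).2) = x ((u - a.1).toNat) := by
      refine Prod.ext_iff.mpr ⟨?_, rfl⟩
      show u = (x ((u - a.1).toNat)).1
      omega
    rw [e]
    exact hmem _ hi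

lemma min3_spec (a b c : ℤ) :
    min a (min b c) ≤ a ∧ min a (min b c) ≤ b ∧ min a (min b c) ≤ c ∧
    (min a (min b c) = a ∨ min a (min b c) = b ∨ min a (min b c) = c) := by
  rcases min_cases a (min b c) with ⟨e1, _⟩ | ⟨e1, _⟩ <;>
  rcases min_cases b c with ⟨e2, _⟩ | ⟨e2, _⟩ <;> omega

lemma push (P S : Set (ℤ × ℤ)) (hup : ∀ p : ℤ × ℤ, p ∈ P → p ∉ S → (p.1, p.2+1) ∈ P)
    (ax a2 bx b2 c z2 : ℤ) (hc1 : ax ≤ c) (hc2 : c ≤ bx)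
    (hz1 : a2 - (c - ax) ≤ z2) (hz2 : z2 ≤ a2 + (c - ax))
    (hz3 : b2 - (bx - c) ≤ z2) (hz4 : z2 ≤ b2 + (bx - c)) :
    ∀ (t : ℕ) (f : ℤ → ℤ),
      (∀ u, ax ≤ u → u < bx → f (u+1) - f u ≤ 1 ∧ f u - f (u+1) ≤ 1) →
      f ax = a2 → f bx = b2 →
      (∀ u, ax ≤ u → u ≤ bx → (u, f u) ∈ P) →
      f c ≤ z2 → z2 - f c ≤ (t:ℤ) →
      ∃ g : ℤ → ℤ,
        (∀ u, ax ≤ u → u < bx → g (u+1) - g u ≤ 1 ∧ g u - g (u+1) ≤ 1) ∧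
        g ax = a2 ∧ g bx = b2 ∧ (∀ u, ax ≤ u → u ≤ bx → (u, g u) ∈ P) ∧
        (g c = z2 ∨ ∃ x0, ax < x0 ∧ x0 < bx ∧ (x0, g x0) ∈ S) := by
  intro t
  induction t with
  | zero =>
    intro f hL hfa hfb hm h1 h2
    exact ⟨f, hL, hfa, hfb, hm, Or.inl (by omega)⟩
  | succ t ih =>
    intro f hL hfa hfb hm h1 h2
    by_cases hcz : f c = z2
    · exact ⟨f, hL, hfa, hfb, hm, Or.inl hcz⟩
    by_cases hS : ∃ x0, ax < x0 ∧ x0 < bx ∧ (x0, f x0) ∈ S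
    · exact ⟨f, hL, hfa, hfb, hm, Or.inr hS⟩
    push_neg at hS
    have hbd := stair_bound f ax bx hL
    have hUa : ∀ u, ax ≤ u → u ≤ bx → f u ≤ a2 + (u - ax) ∧ f u ≤ b2 + (bx - u) := by
      intro u hu1 hu2
      have hα := hbd ax u le_rfl hu1 hu2
      have hβ := hbd u bx hu1 hu2 le_rfl
      omega
    refine ih (fun u => min (f u + 1) (min (a2 + (u - ax)) (b2 + (bx - u)))) ?_ ?_ ?_ ?_ ?_ ?_
    · -- Lipschitz
      intro u hu1 hu2
      have s1 := min3_spec (f u + 1) (a2 + (u - ax)) (b2 + (bx - u))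
      have s2 := min3_spec (f (u+1) + 1) (a2 + (u+1 - ax)) (b2 + (bx - (u+1)))
      have hLu := hL u hu1 hu2
      have hU1 := hUa u hu1 (by omega)
      have hU2 := hUa (u+1) (by omega) hu2
      rcases s1.2.2.2 with e1 | e1 | e1 <;> rcases s2.2.2.2 with e2 | e2 | e2 <;> omega
    · -- value at ax
      have s1 := min3_spec (f ax + 1) (a2 + (ax - ax)) (b2 + (bx - ax))
      have hab := hbd ax bx le_rfl (by omega) le_rfl
      omega
    · have s1 := min3_spec (f bx + 1) (a2 + (bx - ax)) (b2 + (bx - bx))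
      have hab := hbd ax bx le_rfl (by omega) le_rfl
      omega
    · -- membership
      intro u hu1 hu2
      have s1 := min3_spec (f u + 1) (a2 + (u - ax)) (b2 + (bx - u))
      have hU := hUa u hu1 hu2
      have hval : min (f u + 1) (min (a2 + (u - ax)) (b2 + (bx - u))) = f u ∨
          (min (f u + 1) (min (a2 + (u - ax)) (b2 + (bx - u))) = f u + 1 ∧ ax < u ∧ u < bx) := by
        by_cases hua : u = ax
        · subst hua
          left
          rcases s1.2.2.2 with e | e | e <;> omega
        · by_cases hub : u = bx
          · subst hub
            left
            rcases s1.2.2.2 with e | e | e <;> omega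
          · rcases s1.2.2.2 with e | e | e <;> omega
      rcases hval with e | ⟨e, e1, e2⟩
      · rw [e]; exact hm u hu1 hu2
      · rw [e]; exact hup (u, f u) (hm u hu1 hu2) (hS u e1 e2)
    · -- f c ≤ z2 for new function
      have s1 := min3_spec (f c + 1) (a2 + (c - ax)) (b2 + (bx - c))
      omega
    · -- progress
      have s1 := min3_spec (f c + 1) (a2 + (c - ax)) (b2 + (bx - c))
      rcases s1.2.2.2 with e | e | e <;> omega

lemma push_down (P S : Set (ℤ × ℤ)) (hdn : ∀ p : ℤ × ℤ, p ∈ P → p ∉ S → (p.1, p.2-1) ∈ P)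
    (ax a2 bx b2 c z2 : ℤ) (hc1 : ax ≤ c) (hc2 : c ≤ bx)
    (hz1 : a2 - (c - ax) ≤ z2) (hz2 : z2 ≤ a2 + (c - ax))
    (hz3 : b2 - (bx - c) ≤ z2) (hz4 : z2 ≤ b2 + (bx - c))
    (t : ℕ) (f : ℤ → ℤ)
    (hL : ∀ u, ax ≤ u → u < bx → f (u+1) - f u ≤ 1 ∧ f u - f (u+1) ≤ 1)
    (hfa : f ax = a2) (hfb : f bx = b2)
    (hm : ∀ u, ax ≤ u → u ≤ bx → (u, f u) ∈ P)
    (h1 : z2 ≤ f c) (h2 : f c - z2 ≤ (t:ℤ)) :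
    ∃ g : ℤ → ℤ,
      (∀ u, ax ≤ u → u < bx → g (u+1) - g u ≤ 1 ∧ g u - g (u+1) ≤ 1) ∧
      g ax = a2 ∧ g bx = b2 ∧ (∀ u, ax ≤ u → u ≤ bx → (u, g u) ∈ P) ∧
      (g c = z2 ∨ ∃ x0, ax < x0 ∧ x0 < bx ∧ (x0, g x0) ∈ S) := by
  have hup' : ∀ p : ℤ × ℤ, p ∈ {q : ℤ × ℤ | (q.1, -q.2) ∈ P} → p ∉ {q : ℤ × ℤ | (q.1, -q.2) ∈ S} →
      (p.1, p.2+1) ∈ {q : ℤ × ℤ | (q.1, -q.2) ∈ P} := by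
    intro p hp hs
    have := hdn (p.1, -p.2) hp hs
    show (p.1, -(p.2+1)) ∈ P
    have e : -(p.2+1) = -p.2 - 1 := by ring
    rw [e]
    exact this
  obtain ⟨g, gL, ga, gb, gm, gcon⟩ := push {q : ℤ × ℤ | (q.1, -q.2) ∈ P} {q : ℤ × ℤ | (q.1, -q.2) ∈ S}
    hup' ax (-a2) bx (-b2) c (-z2) hc1 hc2 (by omega) (by omega) (by omega) (by omega)
    t (fun u => -(f u))
    (by intro u hu1 hu2; have := hL u hu1 hu2; omega)
    (by omega) (by omega)
    (by intro u hu1 hu2; show (u, -(-(f u))) ∈ P; rw [neg_neg]; exact hm u hu1 hu2)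
    (by omega) (by omega)
  refine ⟨fun u => -(g u), ?_, by dsimp only; omega, by dsimp only; omega, ?_, ?_⟩
  · intro u hu1 hu2; have := gL u hu1 hu2; dsimp only; omega
  · intro u hu1 hu2
    have := gm u hu1 hu2
    exact this
  · rcases gcon with e | ⟨x0, e1, e2, e3⟩
    · left; dsimp only; omega
    · right; exact ⟨x0, e1, e2, e3⟩

lemma stair_split (P : Set (ℤ × ℤ)) {a b : ℤ × ℤ} (f : ℤ → ℤ)
    (hfa : f a.1 = a.2) (hfb : f b.1 = b.2)
    (hL : ∀ u, a.1 ≤ u → u < b.1 → f (u+1) - f u ≤ 1 ∧ f u - f (u+1) ≤ 1)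
    (hm : ∀ u, a.1 ≤ u → u ≤ b.1 → (u, f u) ∈ P)
    (x0 : ℤ) (h1 : a.1 < x0) (h2 : x0 < b.1) :
    (x0, f x0) ≠ a ∧ (x0, f x0) ≠ b ∧ (x0, f x0) ∈ Gset a b ∧
      GeodesicIn P a (x0, f x0) ∧ GeodesicIn P (x0, f x0) b := by
  have g1 := (stair_geodesicIn P f a.1 b.1 a.1 x0 le_rfl (by omega) (by omega) hL hm).1
  have g2 := (stair_geodesicIn P f a.1 b.1 x0 b.1 (by omega) (by omega) le_rfl hL hm).1
  have g3 := (stair_geodesicIn P f a.1 b.1 a.1 b.1 le_rfl (by omega) le_rfl hL hm).2 x0 (by omega) (by omega)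
  rw [hfa, Prod.mk.eta] at g1 g3
  rw [hfb, Prod.mk.eta] at g2 g3
  refine ⟨?_, ?_, g3, g1, g2⟩
  · intro e; have := congrArg Prod.fst e; dsimp only at this; omega
  · intro e; have := congrArg Prod.fst e; dsimp only at this; omega

lemma split_east (P S : Set (ℤ × ℤ))
    (hud : ∀ p : ℤ × ℤ, p ∈ P → p ∉ S → ((p.1, p.2+1) ∈ P ∧ (p.1, p.2-1) ∈ P))
    {a b z : ℤ × ℤ} (he : a.2 - b.2 ≤ b.1 - a.1) (he' : b.2 - a.2 ≤ b.1 - a.1)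
    (hg : GeodesicIn P a b) (hz : z ∈ Gset a b) (hza : z ≠ a) (hzb : z ≠ b) (hzS : z ∈ S) :
    ∃ w, w ∈ S ∧ w ≠ a ∧ w ≠ b ∧ w ∈ Gset a b ∧ GeodesicIn P a w ∧ GeodesicIn P w b := by
  obtain ⟨f, hfa, hfb, hL, hm⟩ := geo_east hg he he'
  have hsum := gset_sum hz
  have hd : dinf a b = b.1 - a.1 := dinf_val a b he' he
  have s1 := dinf_spec a z
  have s2 := dinf_spec z b
  have hza' : ¬ (z.1 = a.1 ∧ z.2 = a.2) := by
    intro ⟨e1, e2⟩; exact hza (Prod.ext_iff.mpr ⟨e1, e2⟩)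
  have hzb' : ¬ (z.1 = b.1 ∧ z.2 = b.2) := by
    intro ⟨e1, e2⟩; exact hzb (Prod.ext_iff.mpr ⟨e1, e2⟩)
  have hc1 : a.1 < z.1 := by omega
  have hc2 : z.1 < b.1 := by omega
  have cone1 : a.2 - (z.1 - a.1) ≤ z.2 := by omega
  have cone2 : z.2 ≤ a.2 + (z.1 - a.1) := by omega
  have cone3 : b.2 - (b.1 - z.1) ≤ z.2 := by omega
  have cone4 : z.2 ≤ b.2 + (b.1 - z.1) := by omega
  have main : ∃ g : ℤ → ℤ,
      (∀ u, a.1 ≤ u → u < b.1 → g (u+1) - g u ≤ 1 ∧ g u - g (u+1) ≤ 1) ∧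
      g a.1 = a.2 ∧ g b.1 = b.2 ∧ (∀ u, a.1 ≤ u → u ≤ b.1 → (u, g u) ∈ P) ∧
      (g z.1 = z.2 ∨ ∃ x0, a.1 < x0 ∧ x0 < b.1 ∧ (x0, g x0) ∈ S) := by
    rcases le_total (f z.1) z.2 with hdir | hdir
    · exact push P S (fun p hp hs => (hud p hp hs).1) a.1 a.2 b.1 b.2 z.1 z.2
        (by omega) (by omega) cone1 cone2 cone3 cone4 (z.2 - f z.1).toNat f hL hfa hfb hm hdir (by omega)
    · exact push_down P S (fun p hp hs => (hud p hp hs).2) a.1 a.2 b.1 b.2 z.1 z.2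
        (by omega) (by omega) cone1 cone2 cone3 cone4 (f z.1 - z.2).toNat f hL hfa hfb hm hdir (by omega)
  obtain ⟨g, gL, ga, gb, gm, gcon⟩ := main
  rcases gcon with e | ⟨x0, e1, e2, e3⟩
  · have hs := stair_split P g ga gb gL gm z.1 hc1 hc2
    have ez : (z.1, g z.1) = z := by rw [e]
    rw [ez] at hs
    exact ⟨z, hzS, hs.1, hs.2.1, hs.2.2.1, hs.2.2.2.1, hs.2.2.2.2⟩
  · have hs := stair_split P g ga gb gL gm x0 e1 e2
    exact ⟨(x0, g x0), e3, hs.1, hs.2.1, hs.2.2.1, hs.2.2.2.1, hs.2.2.2.2⟩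

lemma isGeodesic_map (T : ℤ × ℤ → ℤ × ℤ)
    (hd : ∀ p q, dinf (T p) (T q) = dinf p q)
    (hs : ∀ p q : ℤ × ℤ, |p.1 - q.1| ≤ 1 → |p.2 - q.2| ≤ 1 → |(T p).1 - (T q).1| ≤ 1 ∧ |(T p).2 - (T q).2| ≤ 1)
    (hi : Function.Injective T)
    {x : ℕ → ℤ × ℤ} {n : ℕ} (h : IsGeodesic x n) :
    IsGeodesic (fun i => T (x i)) n := by
  intro i hi'
  obtain ⟨h1, h2, h3, h4⟩ := h i hi'
  dsimp only
  exact ⟨fun e => h1 (hi e), (hs _ _ h2 h3).1, (hs _ _ h2 h3).2, by rw [hd, hd, h4]⟩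

lemma geodesicIn_map (T : ℤ × ℤ → ℤ × ℤ)
    (hd : ∀ p q, dinf (T p) (T q) = dinf p q)
    (hs : ∀ p q : ℤ × ℤ, |p.1 - q.1| ≤ 1 → |p.2 - q.2| ≤ 1 → |(T p).1 - (T q).1| ≤ 1 ∧ |(T p).2 - (T q).2| ≤ 1)
    (hi : Function.Injective T)
    {P : Set (ℤ × ℤ)} {a b : ℤ × ℤ} (h : GeodesicIn P a b) :
    GeodesicIn (T '' P) (T a) (T b) := by
  obtain ⟨n, x, hn, hg, h0, hl, hm⟩ := h
  exact ⟨n, fun i => T (x i), hn, isGeodesic_map T hd hs hi hg, congrArg T h0, congrArg T hl,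
    fun i hi' => ⟨x i, hm i hi', rfl⟩⟩

lemma gset_map (T : ℤ × ℤ → ℤ × ℤ)
    (hd : ∀ p q, dinf (T p) (T q) = dinf p q)
    (hs : ∀ p q : ℤ × ℤ, |p.1 - q.1| ≤ 1 → |p.2 - q.2| ≤ 1 → |(T p).1 - (T q).1| ≤ 1 ∧ |(T p).2 - (T q).2| ≤ 1)
    (hi : Function.Injective T)
    {a b z : ℤ × ℤ} (h : z ∈ Gset a b) : T z ∈ Gset (T a) (T b) := by
  obtain ⟨n, x, hn, hg, h0, hl, i, hi', hxi⟩ := h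
  exact ⟨n, fun i => T (x i), hn, isGeodesic_map T hd hs hi hg, congrArg T h0, congrArg T hl,
    i, hi', congrArg T hxi⟩

lemma split_via (P S : Set (ℤ × ℤ)) (T : ℤ × ℤ → ℤ × ℤ)
    (hd : ∀ p q, dinf (T p) (T q) = dinf p q)
    (hs : ∀ p q : ℤ × ℤ, |p.1 - q.1| ≤ 1 → |p.2 - q.2| ≤ 1 → |(T p).1 - (T q).1| ≤ 1 ∧ |(T p).2 - (T q).2| ≤ 1)
    (hi : Function.Injective T)
    (hinv : ∀ p, T (T p) = p)
    (hud : ∀ p : ℤ × ℤ, p ∈ T '' P → p ∉ T '' S → ((p.1, p.2+1) ∈ T '' P ∧ (p.1, p.2-1) ∈ T '' P))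
    {a b z : ℤ × ℤ}
    (he : (T a).2 - (T b).2 ≤ (T b).1 - (T a).1) (he' : (T b).2 - (T a).2 ≤ (T b).1 - (T a).1)
    (hg : GeodesicIn P a b) (hz : z ∈ Gset a b) (hza : z ≠ a) (hzb : z ≠ b) (hzS : z ∈ S) :
    ∃ w, w ∈ S ∧ w ≠ a ∧ w ≠ b ∧ w ∈ Gset a b ∧ GeodesicIn P a w ∧ GeodesicIn P w b := by
  have himg : T '' (T '' P) = P := by
    rw [Set.image_image]; simp only [hinv]; exact Set.image_id P
  obtain ⟨w', hw'S, hw'a, hw'b, hw'g, hw'1, hw'2⟩ := split_east (T '' P) (T '' S) hud he he'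
    (geodesicIn_map T hd hs hi hg) (gset_map T hd hs hi hz)
    (fun e => hza (hi e)) (fun e => hzb (hi e)) ⟨z, hzS, rfl⟩
  obtain ⟨w, hwS, rfl⟩ := hw'S
  have h1 := geodesicIn_map T hd hs hi hw'1
  have h2 := geodesicIn_map T hd hs hi hw'2
  have h3 := gset_map T hd hs hi hw'g
  rw [himg, hinv, hinv] at h1
  rw [himg, hinv, hinv] at h2
  rw [hinv, hinv, hinv] at h3
  exact ⟨w, hwS, fun e => hw'a (congrArg T e), fun e => hw'b (congrArg T e), h3, h1, h2⟩

lemma split_pts (P S : Set (ℤ × ℤ))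
    (hcl : ∀ p : ℤ × ℤ, p ∈ P → p ∉ S →
      ((p.1 + 1, p.2) ∈ P ∧ (p.1 - 1, p.2) ∈ P ∧ (p.1, p.2 + 1) ∈ P ∧ (p.1, p.2 - 1) ∈ P))
    {a b z : ℤ × ℤ} (hg : GeodesicIn P a b) (hz : z ∈ Gset a b)
    (hza : z ≠ a) (hzb : z ≠ b) (hzS : z ∈ S) :
    ∃ w, w ∈ S ∧ w ≠ a ∧ w ≠ b ∧ w ∈ Gset a b ∧ GeodesicIn P a w ∧ GeodesicIn P w b := by
  have hcases : (a.2 - b.2 ≤ b.1 - a.1 ∧ b.2 - a.2 ≤ b.1 - a.1) ∨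
      (a.2 - b.2 ≤ a.1 - b.1 ∧ b.2 - a.2 ≤ a.1 - b.1) ∨
      (a.1 - b.1 ≤ b.2 - a.2 ∧ b.1 - a.1 ≤ b.2 - a.2) ∨
      (a.1 - b.1 ≤ a.2 - b.2 ∧ b.1 - a.1 ≤ a.2 - b.2) := by omega
  rcases hcases with ⟨h1, h2⟩ | ⟨h1, h2⟩ | ⟨h1, h2⟩ | ⟨h1, h2⟩
  · exact split_east P S (fun p hp hps => ⟨(hcl p hp hps).2.2.1, (hcl p hp hps).2.2.2⟩)
      h1 h2 hg hz hza hzb hzS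
  · -- west : T p = (-p.1, p.2)
    refine split_via P S (fun p => (-p.1, p.2)) ?_ ?_ ?_ ?_ ?_ ?_ ?_ hg hz hza hzb hzS
    · intro p q; unfold dinf; dsimp only
      rw [show -q.1 - -p.1 = -(q.1 - p.1) by ring, abs_neg]
    · intro p q ha hb; dsimp only
      refine ⟨?_, hb⟩
      rw [show -p.1 - -q.1 = -(p.1 - q.1) by ring, abs_neg]; exact ha
    · intro p q e
      have e1 := congrArg Prod.fst e
      have e2 := congrArg Prod.snd e
      dsimp only at e1 e2
      exact Prod.ext_iff.mpr ⟨by omega, e2⟩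
    · intro p; show (-(-p.1), p.2) = p; rw [neg_neg]
    · intro p hp hpS
      obtain ⟨q, hq, rfl⟩ := hp
      have hqS : q ∉ S := fun h => hpS ⟨q, h, rfl⟩
      have h := hcl q hq hqS
      exact ⟨⟨(q.1, q.2+1), h.2.2.1, rfl⟩, ⟨(q.1, q.2-1), h.2.2.2, rfl⟩⟩
    · dsimp only; omega
    · dsimp only; omega
  · -- north : T p = (p.2, p.1)
    refine split_via P S (fun p => (p.2, p.1)) ?_ ?_ ?_ ?_ ?_ ?_ ?_ hg hz hza hzb hzS
    · intro p q; unfold dinf; dsimp only; rw [max_comm]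
    · intro p q ha hb; exact ⟨hb, ha⟩
    · intro p q e
      have e1 := congrArg Prod.fst e
      have e2 := congrArg Prod.snd e
      dsimp only at e1 e2
      exact Prod.ext_iff.mpr ⟨e2, e1⟩
    · intro p; rfl
    · intro p hp hpS
      obtain ⟨q, hq, rfl⟩ := hp
      have hqS : q ∉ S := fun h => hpS ⟨q, h, rfl⟩
      have h := hcl q hq hqS
      exact ⟨⟨(q.1+1, q.2), h.1, rfl⟩, ⟨(q.1-1, q.2), h.2.1, rfl⟩⟩
    · dsimp only; omega
    · dsimp only; omega
  · -- south : T p = (-p.2, -p.1)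
    refine split_via P S (fun p => (-p.2, -p.1)) ?_ ?_ ?_ ?_ ?_ ?_ ?_ hg hz hza hzb hzS
    · intro p q; unfold dinf; dsimp only
      rw [show -q.2 - -p.2 = -(q.2 - p.2) by ring, show -q.1 - -p.1 = -(q.1 - p.1) by ring,
        abs_neg, abs_neg, max_comm]
    · intro p q ha hb; dsimp only
      constructor
      · rw [show -p.2 - -q.2 = -(p.2 - q.2) by ring, abs_neg]; exact hb
      · rw [show -p.1 - -q.1 = -(p.1 - q.1) by ring, abs_neg]; exact ha
    · intro p q e
      have e1 := congrArg Prod.fst e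
      have e2 := congrArg Prod.snd e
      dsimp only at e1 e2
      exact Prod.ext_iff.mpr ⟨by omega, by omega⟩
    · intro p; show (-(-p.1), -(-p.2)) = p; rw [neg_neg, neg_neg]
    · intro p hp hpS
      obtain ⟨q, hq, rfl⟩ := hp
      have hqS : q ∉ S := fun h => hpS ⟨q, h, rfl⟩
      have h := hcl q hq hqS
      constructor
      · exact ⟨(q.1-1, q.2), h.2.1, Prod.ext_iff.mpr ⟨rfl, by dsimp only; ring⟩⟩
      · exact ⟨(q.1+1, q.2), h.1, Prod.ext_iff.mpr ⟨rfl, by dsimp only; ring⟩⟩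
    · dsimp only; omega
    · dsimp only; omega

lemma two_dinf (x y : ℤ × ℤ) :
    2 * dinf x y = |(y.1 - x.1) + (y.2 - x.2)| + |(y.1 - x.1) - (y.2 - x.2)| := by
  have s := dinf_spec x y
  rcases s.2.2.2.2 with e | e | e | e <;>
  rcases abs_cases ((y.1 - x.1) + (y.2 - x.2)) with ⟨e1, _⟩ | ⟨e1, _⟩ <;>
  rcases abs_cases ((y.1 - x.1) - (y.2 - x.2)) with ⟨e2, _⟩ | ⟨e2, _⟩ <;> omega

lemma abs_add_eq {u v : ℤ} (h : |u + v| = |u| + |v|) : (0 ≤ u ∧ 0 ≤ v) ∨ (u ≤ 0 ∧ v ≤ 0) := by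
  rcases abs_cases u with ⟨e1, _⟩ | ⟨e1, _⟩ <;>
  rcases abs_cases v with ⟨e2, _⟩ | ⟨e2, _⟩ <;>
  rcases abs_cases (u + v) with ⟨e3, _⟩ | ⟨e3, _⟩ <;> omega

lemma alpha_add {a z b : ℤ × ℤ} (h : dinf a z + dinf z b = dinf a b) :
    alpha a b = alpha a z + alpha z b := by
  have t1 := two_dinf a z
  have t2 := two_dinf z b
  have t3 := two_dinf a b
  have e3 : (b.1 - a.1) + (b.2 - a.2) = ((z.1 - a.1) + (z.2 - a.2)) + ((b.1 - z.1) + (b.2 - z.2)) := by ring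
  have e4 : (b.1 - a.1) - (b.2 - a.2) = ((z.1 - a.1) - (z.2 - a.2)) + ((b.1 - z.1) - (b.2 - z.2)) := by ring
  rw [e3, e4] at t3
  have habs1 := abs_add_le ((z.1 - a.1) + (z.2 - a.2)) ((b.1 - z.1) + (b.2 - z.2))
  have habs2 := abs_add_le ((z.1 - a.1) - (z.2 - a.2)) ((b.1 - z.1) - (b.2 - z.2))
  have hu : |((z.1 - a.1) - (z.2 - a.2)) + ((b.1 - z.1) - (b.2 - z.2))| =
      |(z.1 - a.1) - (z.2 - a.2)| + |(b.1 - z.1) - (b.2 - z.2)| := by omega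
  have hsgn := abs_add_eq hu
  unfold alpha del
  split_ifs <;> rcases hsgn with ⟨g1, g2⟩ | ⟨g1, g2⟩ <;> omega

/-- Refined tileability criterion: if `g : S → ℤ` agrees with a valid boundary height
function on `∂R` and satisfies the α-bounds for every pair `x ≈_S y`, then it
satisfies the α-bounds for every pair of points of `S` joined by a geodesic path
inside `R`. -/
theorem refined_bounds (R : Set (ℤ × ℤ)) (hfin : R.Finite)
    (hsc : SimplyConnected R) (h g : ℤ × ℤ → ℤ) (S : Set (ℤ × ℤ))
    (hS1 : bdry R ⊆ S) (hS2 : S ⊆ pts R)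
    (hvalid : ValidBoundaryHeight R h)
    (hgh : ∀ v ∈ bdry R, g v = h v)
    (hloc : ∀ a b : ℤ × ℤ, ApproxRel (pts R) S a b →
      -alpha b a ≤ g b - g a ∧ g b - g a ≤ alpha a b) :
    ∀ a ∈ S, ∀ b ∈ S, GeodesicIn (pts R) a b →
      -alpha b a ≤ g b - g a ∧ g b - g a ≤ alpha a b := by
  have hcl : ∀ p : ℤ × ℤ, p ∈ pts R → p ∉ S →
      ((p.1 + 1, p.2) ∈ pts R ∧ (p.1 - 1, p.2) ∈ pts R ∧
        (p.1, p.2 + 1) ∈ pts R ∧ (p.1, p.2 - 1) ∈ pts R) := by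
    intro p hp hps
    have hnb : p ∉ bdry R := fun h => hps (hS1 h)
    have hall : ∀ s : ℤ × ℤ, ((p.1 = s.1 ∨ p.1 = s.1 + 1) ∧ (p.2 = s.2 ∨ p.2 = s.2 + 1)) → s ∈ R := by
      intro s hs
      by_contra hsR
      exact hnb ⟨hp, s, hsR, hs⟩
    have h1 : (p.1, p.2) ∈ R := hall _ ⟨Or.inl rfl, Or.inl rfl⟩
    have h2 : (p.1 - 1, p.2) ∈ R := hall _ ⟨Or.inr (by dsimp only; ring), Or.inl rfl⟩
    have h3 : (p.1, p.2 - 1) ∈ R := hall _ ⟨Or.inl rfl, Or.inr (by dsimp only; ring)⟩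
    exact ⟨⟨(p.1, p.2), h1, Or.inr rfl, Or.inl rfl⟩,
      ⟨(p.1 - 1, p.2), h2, Or.inl rfl, Or.inl rfl⟩,
      ⟨(p.1, p.2), h1, Or.inl rfl, Or.inr rfl⟩,
      ⟨(p.1, p.2 - 1), h3, Or.inl rfl, Or.inl rfl⟩⟩
  suffices H : ∀ N : ℕ, ∀ a b : ℤ × ℤ, a ∈ S → b ∈ S → GeodesicIn (pts R) a b →
      dinf a b ≤ (N : ℤ) → -alpha b a ≤ g b - g a ∧ g b - g a ≤ alpha a b by
    intro a ha b hb hab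
    have hnn := dinf_nonneg' a b
    exact H (dinf a b).toNat a b ha hb hab (by omega)
  intro N
  induction N with
  | zero =>
    intro a b ha hb hab hd0
    refine hloc a b ⟨ha, hb, hab, ?_⟩
    intro z hzG hza _ hzS
    have hsum := gset_sum hzG
    have n1 := dinf_nonneg' a z
    have n2 := dinf_nonneg' z b
    exact hza (dinf_eq_zero' (show dinf a z = 0 by omega)).symm
  | succ N ih =>
    intro a b ha hb hab hdN
    by_cases happ : ∀ z ∈ Gset a b, z ≠ a → z ≠ b → z ∉ S
    · exact hloc a b ⟨ha, hb, hab, happ⟩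
    · push_neg at happ
      obtain ⟨z, hzG, hza, hzb, hzS⟩ := happ
      obtain ⟨w, hwS, hwa, hwb, hwG, hw1, hw2⟩ := split_pts (pts R) S hcl hab hzG hza hzb hzS
      have hsum := gset_sum hwG
      have n1 := dinf_nonneg' a w
      have n2 := dinf_nonneg' w b
      have hw0 : dinf a w ≠ 0 := fun e => hwa (dinf_eq_zero' e).symm
      have hb0 : dinf w b ≠ 0 := fun e => hwb (dinf_eq_zero' e)
      have B1 := ih a w ha hwS hw1 (by omega)
      have B2 := ih w b hwS hb hw2 (by omega)
      have A1 := alpha_add hsum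
      have A2 : alpha b a = alpha b w + alpha w a := by
        refine alpha_add ?_
        have c1 := dinf_comm' a w
        have c2 := dinf_comm' w b
        have c3 := dinf_comm' a b
        omega
      constructor <;> omega
end

section
/- Covering bound for a boundary curve by grid squares: let γ be a closed lattice path in the plane of length p, and partition an axis-aligned bounding square of side n (with n a power of 2, n ≥ p) into 4^i congruent subsquares of side n/2^i. Then the number of subsquares whose interior or boundary is intersected by γ is less than 9·2^{i−1}, provided p ≤ n. -/
/-!
A finite set of lattice points whose horizontal plus vertical spread is at most `n * s` lies in a
box covered by `u + 2` columns and `v + 2` rows of cells of side `s`, where `u + v ≤ n`; so it meets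
at most `(u + 2) * (v + 2) ≤ (n + 4)² / 4` cells. A stretch of `2s` steps of the curve has spread
at most `2s` and meets at most `9` cells. For `i ≥ 2` the curve is a union of `2^(i-1)` such
stretches, and consecutive stretches share the cell of their common point, which leaves at most
`8 * 2^(i-1) + 1` cells. For `i = 1` the curve has length at most `2s`, and since it is closed it
travels each coordinate's range twice, so its spread is at most `s` and it meets at most `6` cells.
-/

open Set

def cellsMeeting (s : ℤ) (P : Set (ℤ × ℤ)) : Set (ℤ × ℤ) :=
  {c | ∃ x ∈ P, c.1 * s ≤ x.1 ∧ x.1 ≤ (c.1 + 1) * s ∧ c.2 * s ≤ x.2 ∧ x.2 ≤ (c.2 + 1) * s}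

section Cells

variable {s : ℤ}

lemma mem_Icc_ediv_of_le_of_le (hs : 0 < s) {c m M x : ℤ} (hm : m ≤ x) (hM : x ≤ M)
    (hcx : c * s ≤ x) (hxc : x ≤ (c + 1) * s) : c ∈ Finset.Icc ((m - 1) / s) (M / s) :=
  Finset.mem_Icc.2
    ⟨by rw [← Int.lt_add_one_iff, Int.ediv_lt_iff_lt_mul hs]; linarith,
      (Int.le_ediv_iff_mul_le hs).2 (by linarith)⟩

lemma card_Icc_ediv_le (hs : 0 < s) {m M : ℤ} (h : m ≤ M) :
    ((Finset.Icc ((m - 1) / s) (M / s)).card : ℤ) ≤ (M - m) / s + 2 := by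
  have hmono : (m - 1) / s ≤ M / s + 1 := (Int.ediv_le_ediv hs (by linarith)).trans (by omega)
  have hsplit : M / s < (M - m) / s + (m - 1) / s + 2 := by
    rw [Int.ediv_lt_iff_lt_mul hs]
    linarith [Int.lt_ediv_add_one_mul_self (M - m) hs, Int.lt_ediv_add_one_mul_self (m - 1) hs]
  rw [Int.card_Icc_of_le _ _ hmono]
  omega

lemma cellsMeeting_subset_product (hs : 0 < s) {P : Set (ℤ × ℤ)} {mx Mx my My : ℤ}
    (hP : ∀ x ∈ P, mx ≤ x.1 ∧ x.1 ≤ Mx ∧ my ≤ x.2 ∧ x.2 ≤ My) :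
    cellsMeeting s P ⊆
      ↑(Finset.Icc ((mx - 1) / s) (Mx / s) ×ˢ Finset.Icc ((my - 1) / s) (My / s)) := by
  rintro c ⟨x, hx, h1, h2, h3, h4⟩
  obtain ⟨hmx, hMx, hmy, hMy⟩ := hP x hx
  exact Finset.mem_product.2
    ⟨mem_Icc_ediv_of_le_of_le hs hmx hMx h1 h2, mem_Icc_ediv_of_le_of_le hs hmy hMy h3 h4⟩

lemma ediv_mem_cellsMeeting (hs : 0 < s) {P : Set (ℤ × ℤ)} {x : ℤ × ℤ} (hx : x ∈ P) :
    (x.1 / s, x.2 / s) ∈ cellsMeeting s P :=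
  ⟨x, hx, Int.ediv_mul_le _ hs.ne', (Int.lt_ediv_add_one_mul_self _ hs).le,
    Int.ediv_mul_le _ hs.ne', (Int.lt_ediv_add_one_mul_self _ hs).le⟩

lemma cellsMeeting_union (P Q : Set (ℤ × ℤ)) :
    cellsMeeting s (P ∪ Q) = cellsMeeting s P ∪ cellsMeeting s Q := by
  ext c
  simp only [cellsMeeting, mem_union, mem_ofPred_eq, or_and_right, exists_or]

lemma Set.Finite.cellsMeeting (hs : 0 < s) {P : Set (ℤ × ℤ)} (hP : P.Finite) :
    (cellsMeeting s P).Finite := by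
  refine (hP.biUnion fun x _ => (Finset.finite_toSet _).subset
    (cellsMeeting_subset_product (P := {x}) (mx := x.1) (Mx := x.1) (my := x.2) (My := x.2) hs
      (by rintro _ rfl; exact ⟨le_rfl, le_rfl, le_rfl, le_rfl⟩))).subset ?_
  rintro c ⟨x, hx, hc⟩
  exact mem_biUnion hx ⟨x, rfl, hc⟩

lemma ncard_cellsMeeting_le (hs : 0 < s) {P : Set (ℤ × ℤ)} (hP : P.Finite) (n : ℕ)
    (hspread : ∀ u ∈ P, ∀ v ∈ P, ∀ w ∈ P, ∀ z ∈ P, u.1 - v.1 + (w.2 - z.2) ≤ n * s) :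
    (cellsMeeting s P).ncard ≤ (n + 4) ^ 2 / 4 := by
  rcases P.eq_empty_or_nonempty with rfl | hne
  · simp [cellsMeeting]
  obtain ⟨u, hu, hMx⟩ := P.exists_max_image Prod.fst hP hne
  obtain ⟨v, hv, hmx⟩ := P.exists_min_image Prod.fst hP hne
  obtain ⟨w, hw, hMy⟩ := P.exists_max_image Prod.snd hP hne
  obtain ⟨z, hz, hmy⟩ := P.exists_min_image Prod.snd hP hne
  have hcard := ncard_le_ncard (cellsMeeting_subset_product hs
    fun x hx => ⟨hmx x hx, hMx x hx, hmy x hx, hMy x hx⟩) (Finset.finite_toSet _)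
  rw [ncard_coe_finset, Finset.card_product] at hcard
  have hcols := card_Icc_ediv_le hs (hmx u hu)
  have hrows := card_Icc_ediv_le hs (hmy w hw)
  have hsum : (u.1 - v.1) / s + (w.2 - z.2) / s ≤ n := calc
    _ ≤ (u.1 - v.1 + (w.2 - z.2)) / s := Int.ediv_add_ediv_le_add_ediv hs
    _ ≤ n * s / s := Int.ediv_le_ediv hs (hspread u hu v hv w hw z hz)
    _ = n := Int.mul_ediv_cancel _ hs.ne'
  have hcols0 : 0 ≤ (u.1 - v.1) / s := Int.ediv_nonneg (sub_nonneg.2 (hmx u hu)) hs.le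
  have hrows0 : 0 ≤ (w.2 - z.2) / s := Int.ediv_nonneg (sub_nonneg.2 (hmy w hw)) hs.le
  rw [Nat.le_div_iff_mul_le (by norm_num)]
  zify at hcard ⊢
  nlinarith [sq_nonneg (((Finset.Icc ((v.1 - 1) / s) (u.1 / s)).card : ℤ) -
    (Finset.Icc ((z.2 - 1) / s) (w.2 / s)).card)]

lemma ncard_cellsMeeting_image_Icc_add_le (hs : 0 < s) (γ : ℕ → ℤ × ℤ) {p L N : ℕ}
    (hwindow : ∀ a b, a ≤ b → b ≤ p → b ≤ a + L →
      (cellsMeeting s (γ '' Icc a b)).ncard ≤ N) (j : ℕ) :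
    (cellsMeeting s (γ '' Icc 0 (min ((j + 1) * L) p))).ncard + j ≤ N * (j + 1) := by
  induction j with
  | zero => simpa using hwindow 0 (min L p) (Nat.zero_le _) (min_le_right _ _) (by omega)
  | succ j ih =>
    set c := min ((j + 1) * L) p
    set d := min ((j + 1 + 1) * L) p
    have hL : (j + 1 + 1) * L = (j + 1) * L + L := by ring
    have hcd : c ≤ d := by omega
    have hfin : ∀ a b, (cellsMeeting s (γ '' Icc a b)).Finite :=
      fun a b => ((finite_Icc a b).image γ).cellsMeeting hs
    have hunion : cellsMeeting s (γ '' Icc 0 d) =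
        cellsMeeting s (γ '' Icc 0 c) ∪ cellsMeeting s (γ '' Icc c d) := by
      rw [← Icc_union_Icc_eq_Icc (Nat.zero_le c) hcd, image_union, cellsMeeting_union]
    have hshared : (cellsMeeting s (γ '' Icc 0 c) ∩ cellsMeeting s (γ '' Icc c d)).Nonempty :=
      ⟨_, ediv_mem_cellsMeeting hs (mem_image_of_mem γ (right_mem_Icc.2 (Nat.zero_le c))),
        ediv_mem_cellsMeeting hs (mem_image_of_mem γ (left_mem_Icc.2 hcd))⟩
    have hinter := (ncard_pos ((hfin 0 c).inter_of_left _)).2 hshared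
    have hadd := ncard_union_add_ncard_inter _ _ (hfin 0 c) (hfin c d)
    have hlast := hwindow c d hcd (min_le_right _ _) (by omega)
    rw [hunion]
    linarith

end Cells

section LatticePath

def IsLatticePath (γ : ℕ → ℤ × ℤ) (p : ℕ) : Prop :=
  ∀ k < p, |(γ (k + 1)).1 - (γ k).1| + |(γ (k + 1)).2 - (γ k).2| = 1

def variation (f : ℕ → ℤ) (a b : ℕ) : ℤ :=
  ∑ k ∈ Finset.Ico a b, |f (k + 1) - f k|

variable {f : ℕ → ℤ}

lemma abs_sub_le_variation {m n : ℕ} (hmn : m ≤ n) : |f n - f m| ≤ variation f m n := by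
  rw [← Finset.sum_Ico_sub f hmn]
  exact Finset.abs_sum_le_sum_abs _ _

lemma variation_add {a m b : ℕ} (ham : a ≤ m) (hmb : m ≤ b) :
    variation f a m + variation f m b = variation f a b :=
  Finset.sum_Ico_consecutive _ ham hmb

lemma variation_mono {a m n b : ℕ} (ham : a ≤ m) (hnb : n ≤ b) :
    variation f m n ≤ variation f a b :=
  Finset.sum_le_sum_of_subset_of_nonneg (Finset.Ico_subset_Ico ham hnb)
    fun _ _ _ => abs_nonneg _

lemma sub_le_variation {a b m n : ℕ} (hm : m ∈ Icc a b) (hn : n ∈ Icc a b) :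
    f n - f m ≤ variation f a b := by
  rcases le_total m n with h | h
  · exact (le_abs_self _).trans ((abs_sub_le_variation h).trans (variation_mono hm.1 hn.2))
  · calc f n - f m ≤ |f m - f n| := abs_sub_comm (f m) (f n) ▸ le_abs_self _
      _ ≤ variation f a b := (abs_sub_le_variation h).trans (variation_mono hn.1 hm.2)

lemma two_mul_abs_sub_le_variation {p : ℕ} (hf : f p = f 0) {m n : ℕ} (hm : m ≤ p)
    (hn : n ≤ p) : 2 * |f n - f m| ≤ variation f 0 p := by
  wlog hmn : m ≤ n generalizing m n
  · rw [abs_sub_comm]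
    exact this hn hm (le_of_not_ge hmn)
  -- the arcs `m → n` and `n → p = 0 → m` both join `f m` to `f n`
  have hback : |f n - f m| ≤ |f m - f 0| + |f p - f n| := calc
    |f n - f m| = |(f 0 - f m) + (f n - f p)| := by rw [hf]; ring_nf
    _ ≤ |f 0 - f m| + |f n - f p| := abs_add_le _ _
    _ = |f m - f 0| + |f p - f n| := by rw [abs_sub_comm (f 0), abs_sub_comm (f n)]
  linarith [abs_sub_le_variation (f := f) hmn, abs_sub_le_variation (f := f) (Nat.zero_le m),
    abs_sub_le_variation (f := f) hn, variation_add (f := f) (Nat.zero_le m) hmn,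
    variation_add (f := f) (Nat.zero_le n) hn]

variable {γ : ℕ → ℤ × ℤ} {p : ℕ}

lemma IsLatticePath.variation_add_variation (hγ : IsLatticePath γ p) {a b : ℕ} (hab : a ≤ b)
    (hbp : b ≤ p) :
    variation (fun k => (γ k).1) a b + variation (fun k => (γ k).2) a b = b - a := by
  rw [variation, variation, ← Finset.sum_add_distrib,
    Finset.sum_congr rfl fun k hk => hγ k ((Finset.mem_Ico.1 hk).2.trans_le hbp)]
  simp [Nat.cast_sub hab]

lemma IsLatticePath.ncard_cellsMeeting_window_le (hγ : IsLatticePath γ p) {s : ℤ} (hs : 0 < s)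
    {a b L n : ℕ} (hab : a ≤ b) (hbp : b ≤ p) (hbL : b ≤ a + L) (hL : (L : ℤ) ≤ n * s) :
    (cellsMeeting s (γ '' Icc a b)).ncard ≤ (n + 4) ^ 2 / 4 := by
  refine ncard_cellsMeeting_le hs ((finite_Icc a b).image γ) n ?_
  simp only [forall_mem_image]
  intro i hi j hj k hk l hl
  have hlen : (b : ℤ) ≤ a + L := by exact_mod_cast hbL
  linarith [sub_le_variation (f := fun k => (γ k).1) hj hi,
    sub_le_variation (f := fun k => (γ k).2) hl hk, hγ.variation_add_variation hab hbp]

lemma IsLatticePath.ncard_cellsMeeting_of_closed (hγ : IsLatticePath γ p) (hclosed : γ p = γ 0)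
    {s : ℤ} (hs : 0 < s) {n : ℕ} (hp : (p : ℤ) ≤ 2 * n * s) :
    (cellsMeeting s (γ '' Icc 0 p)).ncard ≤ (n + 4) ^ 2 / 4 := by
  refine ncard_cellsMeeting_le hs ((finite_Icc 0 p).image γ) n ?_
  simp only [forall_mem_image]
  intro i hi j hj k hk l hl
  have hx := two_mul_abs_sub_le_variation (f := fun k => (γ k).1)
    (congrArg Prod.fst hclosed) hj.2 hi.2
  have hy := two_mul_abs_sub_le_variation (f := fun k => (γ k).2)
    (congrArg Prod.snd hclosed) hl.2 hk.2
  linarith [le_abs_self ((γ i).1 - (γ j).1), le_abs_self ((γ k).2 - (γ l).2),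
    hγ.variation_add_variation (Nat.zero_le p) le_rfl]

end LatticePath

theorem boundary_cell_cover_general (t i p : ℕ) (hi : 1 ≤ i) (hit : i ≤ t)
    (γ : ℕ → ℤ × ℤ) (hpn : (p : ℤ) ≤ 2 ^ t)
    (hclosed : γ p = γ 0)
    (hstep : ∀ k < p, |(γ (k + 1)).1 - (γ k).1| + |(γ (k + 1)).2 - (γ k).2| = 1) :
    {c : ℤ × ℤ | ∃ k < p,
        c.1 * 2 ^ (t - i) ≤ (γ k).1 ∧ (γ k).1 ≤ (c.1 + 1) * 2 ^ (t - i) ∧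
        c.2 * 2 ^ (t - i) ≤ (γ k).2 ∧ (γ k).2 ≤ (c.2 + 1) * 2 ^ (t - i)}.Finite ∧
    {c : ℤ × ℤ | ∃ k < p,
        c.1 * 2 ^ (t - i) ≤ (γ k).1 ∧ (γ k).1 ≤ (c.1 + 1) * 2 ^ (t - i) ∧
        c.2 * 2 ^ (t - i) ≤ (γ k).2 ∧ (γ k).2 ≤ (c.2 + 1) * 2 ^ (t - i)}.ncard
      < 9 * 2 ^ (i - 1) := by
  have hγ : IsLatticePath γ p := hstep
  have hs : (0 : ℤ) < 2 ^ (t - i) := by positivity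
  have hsub : {c : ℤ × ℤ | ∃ k < p,
      c.1 * 2 ^ (t - i) ≤ (γ k).1 ∧ (γ k).1 ≤ (c.1 + 1) * 2 ^ (t - i) ∧
      c.2 * 2 ^ (t - i) ≤ (γ k).2 ∧ (γ k).2 ≤ (c.2 + 1) * 2 ^ (t - i)} ⊆
      cellsMeeting (2 ^ (t - i)) (γ '' Icc 0 p) := by
    rintro c ⟨k, hk, hc⟩
    exact ⟨γ k, mem_image_of_mem γ ⟨k.zero_le, hk.le⟩, hc⟩
  have hfin := ((finite_Icc 0 p).image γ).cellsMeeting hs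
  refine ⟨hfin.subset hsub, (ncard_le_ncard hsub hfin).trans_lt ?_⟩
  have hpow : 2 ^ t = 2 ^ (i - 1) * (2 * 2 ^ (t - i)) := by
    rw [← pow_succ', ← pow_add]; congr 1; omega
  have hpt : p ≤ 2 ^ (i - 1) * (2 * 2 ^ (t - i)) := by rw [← hpow]; exact_mod_cast hpn
  obtain rfl | hi2 := hi.eq_or_lt
  · have h := hγ.ncard_cellsMeeting_of_closed hclosed hs (n := 1)
      (by norm_num at hpt ⊢; exact_mod_cast hpt)
    norm_num at h ⊢
    omega
  · have hW : 2 ≤ 2 ^ (i - 1) := le_self_pow₀ one_le_two (by omega)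
    have h := ncard_cellsMeeting_image_Icc_add_le hs γ (L := 2 * 2 ^ (t - i))
      (fun a b hab hbp hbL => hγ.ncard_cellsMeeting_window_le hs (n := 2) hab hbp hbL
        (by push_cast; rfl)) (2 ^ (i - 1) - 1)
    rw [Nat.sub_add_cancel (by omega), min_eq_right hpt] at h
    norm_num at h
    omega

/-- Covering bound for a boundary curve by grid squares: a closed lattice path of
length `p ≤ n = 2^t`, contained in the square `[0,n]²`, meets fewer than `9·2^(i-1)`
of the `4^i` grid cells of side `n/2^i` (a cell, recorded by its index `c`, is the
square `[c.1·n/2^i, (c.1+1)·n/2^i] × [c.2·n/2^i, (c.2+1)·n/2^i]`). -/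
theorem boundary_cell_cover (t i p : ℕ) (hi : 1 ≤ i) (hit : i ≤ t)
    (γ : ℕ → ℤ × ℤ) (hp : 0 < p) (hpn : (p : ℤ) ≤ 2 ^ t)
    (hclosed : γ p = γ 0)
    (hstep : ∀ k < p, |(γ (k + 1)).1 - (γ k).1| + |(γ (k + 1)).2 - (γ k).2| = 1)
    (hbound : ∀ k ≤ p, 0 ≤ (γ k).1 ∧ (γ k).1 ≤ 2 ^ t ∧ 0 ≤ (γ k).2 ∧ (γ k).2 ≤ 2 ^ t) :
    {c : ℤ × ℤ | ∃ k < p,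
        c.1 * 2 ^ (t - i) ≤ (γ k).1 ∧ (γ k).1 ≤ (c.1 + 1) * 2 ^ (t - i) ∧
        c.2 * 2 ^ (t - i) ≤ (γ k).2 ∧ (γ k).2 ≤ (c.2 + 1) * 2 ^ (t - i)}.Finite ∧
    {c : ℤ × ℤ | ∃ k < p,
        c.1 * 2 ^ (t - i) ≤ (γ k).1 ∧ (γ k).1 ≤ (c.1 + 1) * 2 ^ (t - i) ∧
        c.2 * 2 ^ (t - i) ≤ (γ k).2 ∧ (γ k).2 ≤ (c.2 + 1) * 2 ^ (t - i)}.ncard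
      < 9 * 2 ^ (i - 1) :=
  boundary_cell_cover_general t i p hi hit γ hpn hclosed hstep
end

section
/- In the triangular grid, every geodesic path uses at most two of the three directions v_1, v_2, v_3: if (x_1, ..., x_n) is a sequence of triangular lattice points with each step x_{i+1} − x_i ∈ {v_1, v_2, v_3} and ||x_{i+1} − x_1||_1 = ||x_i − x_1||_1 + 1 for all i (where ||·||_1 denotes the triangular-coordinate norm a + b + c with min{a,b,c} = 0), then the set of step vectors {x_{i+1} − x_i : 1 ≤ i < n} has cardinality at most 2. -/
/-- The triangular-coordinate norm of a point of the triangular grid, written in the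
basis `v₁, v₂` (so that the point `(m,n)` is `m·v₁ + n·v₂`, and the three unit
directions are `v₁ = (1,0)`, `v₂ = (0,1)`, `v₃ = -v₁ - v₂ = (-1,-1)`): it equals
`a + b + c` for the unique representation `a·v₁ + b·v₂ + c·v₃` with
`a, b, c ≥ 0` and `min {a,b,c} = 0`. -/
def tnorm (p : ℤ × ℤ) : ℤ := p.1 + p.2 + 3 * max 0 (max (-p.1) (-p.2))

/-- In the triangular grid, every geodesic path uses at most two of the three
directions `v₁, v₂, v₃`. -/
theorem tri_geodesic_two_directions (x : ℕ → ℤ × ℤ) (n : ℕ)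
    (hstep : ∀ i, i + 1 < n →
      (x (i + 1) - x i = (1, 0) ∨ x (i + 1) - x i = (0, 1) ∨ x (i + 1) - x i = (-1, -1)))
    (hgeo : ∀ i, i + 1 < n → tnorm (x (i + 1) - x 0) = tnorm (x i - x 0) + 1) :
    {v : ℤ × ℤ | ∃ i, i + 1 < n ∧ x (i + 1) - x i = v}.ncard ≤ 2 := by
  by_contra hcon
  push_neg at hcon
  set S : Set (ℤ × ℤ) := {v : ℤ × ℤ | ∃ i, i + 1 < n ∧ x (i + 1) - x i = v} with hSdef
  set T : Set (ℤ × ℤ) := {(1, 0), (0, 1), (-1, -1)} with hTdef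
  have hsub : S ⊆ T := by
    rintro v ⟨i, hi, hv⟩
    rcases hstep i hi with h | h | h <;> simp [hTdef, ← hv, h]
  have hTfin : T.Finite := Set.toFinite T
  have hT3 : T.ncard = 3 := by
    rw [hTdef, Set.ncard_insert_of_notMem (by simp) ((Set.finite_singleton _).insert _),
      Set.ncard_insert_of_notMem (by simp), Set.ncard_singleton]
  have hST : S = T := Set.eq_of_subset_of_ncard_le hsub (by omega) hTfin
  -- auxiliary coordinate functions
  set C : ℕ → ℤ := fun i => max 0 (max (-(x i - x 0).1) (-(x i - x 0).2)) with hC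
  set A : ℕ → ℤ := fun i => (x i - x 0).1 + C i with hA
  set B : ℕ → ℤ := fun i => (x i - x 0).2 + C i with hB
  have key : ∀ i, i + 1 < n →
      A i ≤ A (i + 1) ∧ B i ≤ B (i + 1) ∧ C i ≤ C (i + 1) ∧
      (x (i + 1) - x i = (1, 0) → A (i + 1) = A i + 1) ∧
      (x (i + 1) - x i = (0, 1) → B (i + 1) = B i + 1) ∧
      (x (i + 1) - x i = (-1, -1) → C (i + 1) = C i + 1) := by
    intro i hi
    have hg := hgeo i hi
    have h1 : (x (i + 1) - x 0).1 = (x i - x 0).1 + (x (i + 1) - x i).1 := by simp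
    have h2 : (x (i + 1) - x 0).2 = (x i - x 0).2 + (x (i + 1) - x i).2 := by simp
    rcases hstep i hi with h | h | h <;>
      · rw [h] at h1 h2
        simp only [tnorm] at hg
        simp only [hA, hB, hC, h]
        rw [h1, h2] at hg ⊢
        constructor
        · omega
        refine ⟨by omega, by omega, ?_, ?_, ?_⟩ <;> intro hv <;>
          first
            | omega
            | simp [Prod.ext_iff] at hv
  have mono : ∀ k, k < n → ∀ j, j ≤ k → A j ≤ A k ∧ B j ≤ B k ∧ C j ≤ C k := by
    intro k
    induction k with
    | zero => intro _ j hj; interval_cases j; simp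
    | succ m ih =>
        intro hk j hj
        rcases Nat.lt_succ_iff_lt_or_eq.mp (Nat.lt_succ_of_le hj) with hj' | hj'
        · have h1 := ih (by omega) j (by omega)
          have h2 := key m hk
          exact ⟨h1.1.trans h2.1, h1.2.1.trans h2.2.1, h1.2.2.trans h2.2.2.1⟩
        · subst hj'; exact ⟨le_refl _, le_refl _, le_refl _⟩
  have hnonneg : ∀ i, 0 ≤ A i ∧ 0 ≤ B i ∧ 0 ≤ C i := by
    intro i; simp only [hA, hB, hC]; omega
  -- each direction occurs
  have hv1 : ((1 : ℤ), (0 : ℤ)) ∈ S := hST ▸ (by simp [hTdef])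
  have hv2 : ((0 : ℤ), (1 : ℤ)) ∈ S := hST ▸ (by simp [hTdef])
  have hv3 : ((-1 : ℤ), (-1 : ℤ)) ∈ S := hST ▸ (by simp [hTdef])
  obtain ⟨i1, hi1, hs1⟩ := hv1
  obtain ⟨i2, hi2, hs2⟩ := hv2
  obtain ⟨i3, hi3, hs3⟩ := hv3
  have hn : 1 ≤ n := by omega
  set m := n - 1 with hm
  have hA1 : 1 ≤ A m := by
    have h := (key i1 hi1).2.2.2.1 hs1
    have h0 := (hnonneg i1).1
    have := (mono m (by omega) (i1 + 1) (by omega)).1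
    omega
  have hB1 : 1 ≤ B m := by
    have h := (key i2 hi2).2.2.2.2.1 hs2
    have h0 := (hnonneg i2).2.1
    have := (mono m (by omega) (i2 + 1) (by omega)).2.1
    omega
  have hC1 : 1 ≤ C m := by
    have h := (key i3 hi3).2.2.2.2.2 hs3
    have h0 := (hnonneg i3).2.2
    have := (mono m (by omega) (i3 + 1) (by omega)).2.2
    omega
  simp only [hA, hB, hC] at hA1 hB1 hC1
  omega
end
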